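/- arXiv:2209.14963 — 3 statements merged into one kernel-verified Lean document; each statement's English description precedes it below -/
import Mathlib

section
/- Let R ∈ ℝ^{m×n} have every entry of absolute value at most C, and let K := C/(1−β). Then the map π ↦ V(π,R) from the metric space (Π_MR, μ) to (ℝ^m, ‖·‖_∞) is Lipschitz continuous with Lipschitz constant Kδ/(δ − β); that is, ‖V(π₁,R) − V(π₂,R)‖_∞ ≤ [Kδ/(δ − β)] · μ(π₁,π₂) for all policies π₁, π₂. -/
open Finset Filter Matrix

/-- A row-stochastic matrix (decision rule): nonnegative entries, each row sums to 1. -/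
def IsStoch (m n : ℕ) (d : Matrix (Fin m) (Fin n) ℝ) : Prop :=
  (∀ s a, 0 ≤ d s a) ∧ ∀ s, ∑ a, d s a = 1

/-- Valid transition probabilities `p s a s' = p(s'|s,a)`. -/
def IsTransKer (m n : ℕ) (p : Fin m → Fin n → Fin m → ℝ) : Prop :=
  (∀ s a s', 0 ≤ p s a s') ∧ ∀ s a, ∑ s', p s a s' = 1

/-- Max absolute entry norm on vectors. -/
noncomputable def vecNorm {m : ℕ} (v : Fin m → ℝ) : ℝ := ⨆ i, |v i|

/-- Maximum absolute row-sum norm on matrices. -/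
noncomputable def rowSumNorm {m n : ℕ} (B : Matrix (Fin m) (Fin n) ℝ) : ℝ :=
  ⨆ i, ∑ j, |B i j|

/-- Max absolute entry norm on matrices. -/
noncomputable def maxNorm {m n : ℕ} (B : Matrix (Fin m) (Fin n) ℝ) : ℝ :=
  ⨆ i, ⨆ j, |B i j|

/-- `(R_d)_s = ∑_a R(s,a) d(a|s)`. -/
noncomputable def Rvec {m n : ℕ} (R d : Matrix (Fin m) (Fin n) ℝ) : Fin m → ℝ :=
  fun s => ∑ a, R s a * d s a

/-- `(P_d)_{s,s'} = ∑_a p(s'|s,a) d(a|s)`. -/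
noncomputable def Pmat {m n : ℕ} (p : Fin m → Fin n → Fin m → ℝ)
    (d : Matrix (Fin m) (Fin n) ℝ) : Matrix (Fin m) (Fin m) ℝ :=
  fun s s' => ∑ a, p s a s' * d s a

/-- `P_0^π = I`, `P_{t+1}^π = P_t^π ⬝ P_{d_t}`. -/
noncomputable def Ppi {m n : ℕ} (p : Fin m → Fin n → Fin m → ℝ)
    (π : ℕ → Matrix (Fin m) (Fin n) ℝ) : ℕ → Matrix (Fin m) (Fin m) ℝ
  | 0 => 1
  | t + 1 => Ppi p π t * Pmat p (π t)

/-- Finite-horizon standard discounted cost vector `V_T(π,R)`. -/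
noncomputable def VT {m n : ℕ} (β : ℝ) (p : Fin m → Fin n → Fin m → ℝ)
    (π : ℕ → Matrix (Fin m) (Fin n) ℝ) (R : Matrix (Fin m) (Fin n) ℝ) (T : ℕ) :
    Fin m → ℝ :=
  fun x => ∑ t ∈ Finset.range T, β ^ t * (Ppi p π t *ᵥ Rvec R (π t)) x

/-- Infinite-horizon standard discounted cost vector `V(π,R)`. -/
noncomputable def Vinf {m n : ℕ} (β : ℝ) (p : Fin m → Fin n → Fin m → ℝ)
    (π : ℕ → Matrix (Fin m) (Fin n) ℝ) (R : Matrix (Fin m) (Fin n) ℝ) :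
    Fin m → ℝ :=
  fun x => ∑' t : ℕ, β ^ t * (Ppi p π t *ᵥ Rvec R (π t)) x

/-- `Qrev β γ p π R T k = Q_{T-1-k}^{T,π,R}`, defined by the backward recursion. -/
noncomputable def Qrev {m n : ℕ} (β γ : ℝ) (p : Fin m → Fin n → Fin m → ℝ)
    (π : ℕ → Matrix (Fin m) (Fin n) ℝ) (R : Matrix (Fin m) (Fin n) ℝ) (T : ℕ) :
    ℕ → Matrix (Fin m) (Fin n) ℝ
  | 0 => fun s a => Real.exp (γ * β ^ (T - 1) * R s a)
  | k + 1 => fun s a =>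
      Real.exp (γ * β ^ (T - 1 - (k + 1)) * R s a) *
        ∑ s', p s a s' * ∑ a', π (T - 1 - k) s' a' * Qrev β γ p π R T k s' a'

/-- `Q_t^{T,π,R}` for `0 ≤ t ≤ T-1`. -/
noncomputable def Qmat {m n : ℕ} (β γ : ℝ) (p : Fin m → Fin n → Fin m → ℝ)
    (π : ℕ → Matrix (Fin m) (Fin n) ℝ) (R : Matrix (Fin m) (Fin n) ℝ) (T t : ℕ) :
    Matrix (Fin m) (Fin n) ℝ :=
  Qrev β γ p π R T (T - 1 - t)

/-- Finite-horizon risk-sensitive cost vector `J_T(π,γ,R)`. -/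
noncomputable def JT {m n : ℕ} (β γ : ℝ) (p : Fin m → Fin n → Fin m → ℝ)
    (π : ℕ → Matrix (Fin m) (Fin n) ℝ) (R : Matrix (Fin m) (Fin n) ℝ) (T : ℕ) :
    Fin m → ℝ :=
  fun s => ∑ a, π 0 s a * Qmat β γ p π R T 0 s a

/-- Infinite-horizon risk-sensitive cost `J(π,γ,R)(x) = lim_{T→∞} J_T(π,γ,R)(x)`. -/
noncomputable def Jinf {m n : ℕ} (β γ : ℝ) (p : Fin m → Fin n → Fin m → ℝ)
    (π : ℕ → Matrix (Fin m) (Fin n) ℝ) (R : Matrix (Fin m) (Fin n) ℝ) (x : Fin m) : ℝ :=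
  limUnder atTop (fun T => JT β γ p π R T x)

/-- The metric `μ(π₁,π₂) = sup_t δ^t ‖d_t − f_t‖_∞` on Markovian randomized policies. -/
noncomputable def policyDist {m n : ℕ} (δ : ℝ)
    (π₁ π₂ : ℕ → Matrix (Fin m) (Fin n) ℝ) : ℝ :=
  ⨆ t : ℕ, δ ^ t * rowSumNorm (π₁ t - π₂ t)

/-! In the row-sum norm every decision rule, every `P_d` and every product `P_t^π` has norm at
most one, while `d ↦ P_d` is 1-Lipschitz and `d ↦ R_d` is `C`-Lipschitz. Telescoping the products
therefore gives
`‖P_t^{π₁} R_{d_t} - P_t^{π₂} R_{f_t}‖ ≤ C ∑_{k ≤ t} ‖d_k - f_k‖ ≤ C μ ∑_{k ≤ t} δ⁻ᵏ`.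
Weighted by `βᵗ` and summed, the right-hand side is `C μ` times the Cauchy product of
`∑ βᵗ` and `∑ (β/δ)ᵏ`, that is `C μ δ / ((1 - β)(δ - β))`. -/

open scoped Matrix.Norms.Operator

section
variable {m n : ℕ}

lemma rowSumNorm_eq_norm (B : Matrix (Fin m) (Fin n) ℝ) : rowSumNorm B = ‖B‖ := by
  simp [rowSumNorm, linfty_opNorm_def, Finset.sup_univ_eq_ciSup, NNReal.coe_iSup]

lemma vecNorm_eq_norm (v : Fin m → ℝ) : vecNorm v = ‖v‖ := by
  simp [vecNorm, Pi.norm_def, Finset.sup_univ_eq_ciSup, NNReal.coe_iSup]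

lemma sum_abs_le_norm (B : Matrix (Fin m) (Fin n) ℝ) (s : Fin m) : ∑ a, |B s a| ≤ ‖B‖ := by
  rw [← rowSumNorm_eq_norm]
  exact le_ciSup (f := fun i => ∑ j, |B i j|) (Set.finite_range _).bddAbove s

lemma norm_le_of_forall_sum_abs_le {B : Matrix (Fin m) (Fin n) ℝ} {c : ℝ} (hc : 0 ≤ c)
    (h : ∀ s, ∑ a, |B s a| ≤ c) : ‖B‖ ≤ c := by
  rw [← rowSumNorm_eq_norm]
  exact Real.iSup_le h hc

lemma IsStoch.norm_le_one {d : Matrix (Fin m) (Fin n) ℝ} (hd : IsStoch m n d) : ‖d‖ ≤ 1 :=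
  norm_le_of_forall_sum_abs_le zero_le_one fun s => by
    rw [sum_congr rfl fun a _ => abs_of_nonneg (hd.1 s a), hd.2 s]

lemma Pmat_sub (p : Fin m → Fin n → Fin m → ℝ) (d f : Matrix (Fin m) (Fin n) ℝ) :
    Pmat p d - Pmat p f = Pmat p (d - f) := by
  ext s s'
  simp [Pmat, mul_sub, sum_sub_distrib]

lemma IsTransKer.norm_Pmat_le {p : Fin m → Fin n → Fin m → ℝ} (hp : IsTransKer m n p)
    (e : Matrix (Fin m) (Fin n) ℝ) : ‖Pmat p e‖ ≤ ‖e‖ := by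
  refine norm_le_of_forall_sum_abs_le (norm_nonneg e) fun s => ?_
  calc ∑ s', |Pmat p e s s'| ≤ ∑ s', ∑ a, p s a s' * |e s a| := by
        refine sum_le_sum fun s' _ => (abs_sum_le_sum_abs _ _).trans_eq ?_
        simp only [abs_mul, abs_of_nonneg (hp.1 s _ s')]
    _ = ∑ a, |e s a| := by
        rw [sum_comm]
        simp [← sum_mul, hp.2]
    _ ≤ ‖e‖ := sum_abs_le_norm e s

lemma Rvec_sub (R d f : Matrix (Fin m) (Fin n) ℝ) : Rvec R d - Rvec R f = Rvec R (d - f) := by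
  ext s
  simp [Rvec, mul_sub, sum_sub_distrib]

lemma norm_Rvec_le {R : Matrix (Fin m) (Fin n) ℝ} {C : ℝ} (hC : 0 ≤ C)
    (hR : ∀ s a, |R s a| ≤ C) (e : Matrix (Fin m) (Fin n) ℝ) : ‖Rvec R e‖ ≤ C * ‖e‖ := by
  refine (pi_norm_le_iff_of_nonneg (by positivity)).2 fun s => ?_
  rw [Real.norm_eq_abs]
  calc |Rvec R e s| ≤ ∑ a, |R s a| * |e s a| := by
        simpa only [Rvec, abs_mul] using abs_sum_le_sum_abs (fun a => R s a * e s a) univ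
    _ ≤ ∑ a, C * |e s a| := by gcongr with a; exact hR s a
    _ = C * ∑ a, |e s a| := (mul_sum _ _ _).symm
    _ ≤ C * ‖e‖ := by gcongr; exact sum_abs_le_norm e s

end

noncomputable def discCost {m n : ℕ} (β : ℝ) (p : Fin m → Fin n → Fin m → ℝ)
    (π : ℕ → Matrix (Fin m) (Fin n) ℝ) (R : Matrix (Fin m) (Fin n) ℝ) (t : ℕ) : Fin m → ℝ :=
  β ^ t • (Ppi p π t *ᵥ Rvec R (π t))

section
variable {m n : ℕ} {p : Fin m → Fin n → Fin m → ℝ} {π π₁ π₂ : ℕ → Matrix (Fin m) (Fin n) ℝ}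
  {R : Matrix (Fin m) (Fin n) ℝ} {β C : ℝ}

lemma norm_Ppi_le_one (hp : IsTransKer m n p) (hπ : ∀ t, IsStoch m n (π t)) (t : ℕ) :
    ‖Ppi p π t‖ ≤ 1 := by
  induction t with
  | zero =>
    exact norm_le_of_forall_sum_abs_le zero_le_one fun s => by simp [Ppi, one_apply, apply_ite]
  | succ t ih =>
    calc ‖Ppi p π t * Pmat p (π t)‖ ≤ ‖Ppi p π t‖ * ‖Pmat p (π t)‖ := norm_mul_le _ _
      _ ≤ 1 * 1 := by gcongr; exact (hp.norm_Pmat_le _).trans (hπ t).norm_le_one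
      _ = 1 := one_mul 1

lemma norm_Ppi_sub_le (hp : IsTransKer m n p) (h₁ : ∀ t, IsStoch m n (π₁ t))
    (h₂ : ∀ t, IsStoch m n (π₂ t)) (t : ℕ) :
    ‖Ppi p π₁ t - Ppi p π₂ t‖ ≤ ∑ k ∈ range t, ‖π₁ k - π₂ k‖ := by
  induction t with
  | zero => simp [Ppi]
  | succ t ih =>
    have hsplit : Ppi p π₁ (t + 1) - Ppi p π₂ (t + 1) =
        Ppi p π₁ t * Pmat p (π₁ t - π₂ t) + (Ppi p π₁ t - Ppi p π₂ t) * Pmat p (π₂ t) := by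
      simp only [Ppi, ← Pmat_sub, mul_sub, sub_mul]
      abel
    calc ‖Ppi p π₁ (t + 1) - Ppi p π₂ (t + 1)‖
        ≤ ‖Ppi p π₁ t‖ * ‖Pmat p (π₁ t - π₂ t)‖
          + ‖Ppi p π₁ t - Ppi p π₂ t‖ * ‖Pmat p (π₂ t)‖ := by
          rw [hsplit]
          exact norm_add_le_of_le (norm_mul_le _ _) (norm_mul_le _ _)
      _ ≤ 1 * ‖π₁ t - π₂ t‖ + (∑ k ∈ range t, ‖π₁ k - π₂ k‖) * 1 := by
          gcongr
          · exact norm_Ppi_le_one hp h₁ t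
          · exact hp.norm_Pmat_le _
          · exact (hp.norm_Pmat_le _).trans (h₂ t).norm_le_one
      _ = ∑ k ∈ range (t + 1), ‖π₁ k - π₂ k‖ := by rw [sum_range_succ]; ring

lemma norm_discCost_le (hp : IsTransKer m n p) (hC : 0 ≤ C) (hR : ∀ s a, |R s a| ≤ C)
    (hπ : ∀ t, IsStoch m n (π t)) (hβ0 : 0 ≤ β) (t : ℕ) :
    ‖discCost β p π R t‖ ≤ C * β ^ t := by
  rw [discCost, norm_smul, Real.norm_of_nonneg (pow_nonneg hβ0 t), mul_comm]
  gcongr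
  calc ‖Ppi p π t *ᵥ Rvec R (π t)‖ ≤ ‖Ppi p π t‖ * ‖Rvec R (π t)‖ := linfty_opNorm_mulVec _ _
    _ ≤ 1 * (C * 1) := by
        gcongr
        · exact norm_Ppi_le_one hp hπ t
        · exact (norm_Rvec_le hC hR _).trans (mul_le_mul_of_nonneg_left (hπ t).norm_le_one hC)
    _ = C := by ring

lemma hasSum_discCost (hp : IsTransKer m n p) (hC : 0 ≤ C) (hR : ∀ s a, |R s a| ≤ C)
    (hπ : ∀ t, IsStoch m n (π t)) (hβ0 : 0 ≤ β) (hβ1 : β < 1) :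
    HasSum (discCost β p π R) (Vinf β p π R) := by
  have hsum : Summable (discCost β p π R) :=
    .of_norm_bounded ((summable_geometric_of_lt_one hβ0 hβ1).mul_left C)
      (norm_discCost_le hp hC hR hπ hβ0)
  convert hsum.hasSum
  ext x
  rw [tsum_apply hsum]
  simp only [Vinf, discCost, Pi.smul_apply, smul_eq_mul]

lemma norm_discCost_sub_le (hp : IsTransKer m n p) (hC : 0 ≤ C) (hR : ∀ s a, |R s a| ≤ C)
    (h₁ : ∀ t, IsStoch m n (π₁ t)) (h₂ : ∀ t, IsStoch m n (π₂ t)) (hβ0 : 0 ≤ β) (t : ℕ) :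
    ‖discCost β p π₁ R t - discCost β p π₂ R t‖
      ≤ C * β ^ t * ∑ k ∈ range (t + 1), ‖π₁ k - π₂ k‖ := by
  have hsplit : Ppi p π₁ t *ᵥ Rvec R (π₁ t) - Ppi p π₂ t *ᵥ Rvec R (π₂ t) =
      Ppi p π₁ t *ᵥ Rvec R (π₁ t - π₂ t) + (Ppi p π₁ t - Ppi p π₂ t) *ᵥ Rvec R (π₂ t) := by
    rw [← Rvec_sub, mulVec_sub, sub_mulVec]
    abel
  have hcost : ‖Ppi p π₁ t *ᵥ Rvec R (π₁ t) - Ppi p π₂ t *ᵥ Rvec R (π₂ t)‖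
      ≤ C * ∑ k ∈ range (t + 1), ‖π₁ k - π₂ k‖ :=
    calc _ ≤ ‖Ppi p π₁ t‖ * ‖Rvec R (π₁ t - π₂ t)‖
          + ‖Ppi p π₁ t - Ppi p π₂ t‖ * ‖Rvec R (π₂ t)‖ := by
          rw [hsplit]
          exact norm_add_le_of_le (linfty_opNorm_mulVec _ _) (linfty_opNorm_mulVec _ _)
      _ ≤ 1 * (C * ‖π₁ t - π₂ t‖) + (∑ k ∈ range t, ‖π₁ k - π₂ k‖) * (C * 1) := by
          gcongr
          · exact norm_Ppi_le_one hp h₁ t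
          · exact norm_Rvec_le hC hR _
          · exact norm_Ppi_sub_le hp h₁ h₂ t
          · exact (norm_Rvec_le hC hR _).trans (mul_le_mul_of_nonneg_left (h₂ t).norm_le_one hC)
      _ = C * ∑ k ∈ range (t + 1), ‖π₁ k - π₂ k‖ := by rw [sum_range_succ]; ring
  rw [discCost, discCost, ← smul_sub, norm_smul, Real.norm_of_nonneg (pow_nonneg hβ0 t)]
  calc _ ≤ β ^ t * (C * ∑ k ∈ range (t + 1), ‖π₁ k - π₂ k‖) := by gcongr
    _ = _ := by ring

end

lemma norm_sub_le_policyDist_mul_inv_pow {m n : ℕ} {π₁ π₂ : ℕ → Matrix (Fin m) (Fin n) ℝ}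
    {δ : ℝ} (hδ0 : 0 < δ) (hδ1 : δ ≤ 1) {c : ℝ} (hc : ∀ t, ‖π₁ t - π₂ t‖ ≤ c) (k : ℕ) :
    ‖π₁ k - π₂ k‖ ≤ policyDist δ π₁ π₂ * δ⁻¹ ^ k := by
  have hbdd : BddAbove (Set.range fun t => δ ^ t * rowSumNorm (π₁ t - π₂ t)) := by
    refine ⟨1 * c, Set.forall_mem_range.2 fun t => ?_⟩
    rw [rowSumNorm_eq_norm]
    have hc0 : 0 ≤ c := (norm_nonneg _).trans (hc 0)
    gcongr
    exacts [pow_le_one₀ hδ0.le hδ1, hc t]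
  rw [inv_pow, ← div_eq_mul_inv, le_div_iff₀ (pow_pos hδ0 k), mul_comm, ← rowSumNorm_eq_norm]
  exact le_ciSup hbdd k

lemma hasSum_pow_mul_sum_range_inv_pow {β δ : ℝ} (hβ0 : 0 ≤ β) (hβ1 : β < 1) (hβδ : β < δ) :
    HasSum (fun t => β ^ t * ∑ k ∈ range (t + 1), δ⁻¹ ^ k) (δ / ((1 - β) * (δ - β))) := by
  have hδ0 : 0 < δ := hβ0.trans_lt hβδ
  have hr0 : 0 ≤ β / δ := div_nonneg hβ0 hδ0.le
  have hr1 : β / δ < 1 := (div_lt_one hδ0).2 hβδ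
  have hcauchy := hasSum_sum_range_mul_of_summable_norm (f := fun k => (β / δ) ^ k)
    (g := fun j => β ^ j)
    (by simpa [abs_of_nonneg hr0] using summable_geometric_of_lt_one hr0 hr1)
    (by simpa [abs_of_nonneg hβ0] using summable_geometric_of_lt_one hβ0 hβ1)
  rw [tsum_geometric_of_lt_one hr0 hr1, tsum_geometric_of_lt_one hβ0 hβ1] at hcauchy
  have hterm : ∀ t, β ^ t * ∑ k ∈ range (t + 1), δ⁻¹ ^ k
      = ∑ k ∈ range (t + 1), (β / δ) ^ k * β ^ (t - k) := fun t => by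
    rw [mul_sum]
    refine sum_congr rfl fun k hk => ?_
    rw [← pow_mul_pow_sub β (mem_range_succ_iff.1 hk), div_eq_mul_inv, mul_pow]
    ring
  have hval : δ / ((1 - β) * (δ - β)) = (1 - β / δ)⁻¹ * (1 - β)⁻¹ := by
    have h1β : 1 - β ≠ 0 := (sub_pos.2 hβ1).ne'
    have hδβ : δ - β ≠ 0 := (sub_pos.2 hβδ).ne'
    field_simp
  simpa only [hterm, hval] using hcauchy

theorem stmt_6_general (m n : ℕ)
    (p : Fin m → Fin n → Fin m → ℝ) (hp : IsTransKer m n p)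
    (β : ℝ) (hβ0 : 0 < β) (hβ1 : β < 1)
    (C : ℝ) (hC : 0 < C)
    (δ : ℝ) (hδ : β < δ) (hδ1 : δ < 1)
    (R : Matrix (Fin m) (Fin n) ℝ) (hR : ∀ s a, |R s a| ≤ C)
    (π₁ π₂ : ℕ → Matrix (Fin m) (Fin n) ℝ)
    (h₁ : ∀ t, IsStoch m n (π₁ t)) (h₂ : ∀ t, IsStoch m n (π₂ t)) :
    vecNorm (Vinf β p π₁ R - Vinf β p π₂ R) ≤
      C / (1 - β) * δ / (δ - β) * policyDist δ π₁ π₂ := by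
  set μ := policyDist δ π₁ π₂
  have hdist : ∀ k, ‖π₁ k - π₂ k‖ ≤ μ * δ⁻¹ ^ k :=
    norm_sub_le_policyDist_mul_inv_pow (hβ0.trans hδ) hδ1.le fun t =>
      (norm_sub_le _ _).trans (add_le_add (h₁ t).norm_le_one (h₂ t).norm_le_one)
  have hterm : ∀ t, ‖discCost β p π₁ R t - discCost β p π₂ R t‖
      ≤ C * μ * (β ^ t * ∑ k ∈ range (t + 1), δ⁻¹ ^ k) := fun t =>
    calc _ ≤ C * β ^ t * ∑ k ∈ range (t + 1), ‖π₁ k - π₂ k‖ :=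
          norm_discCost_sub_le hp hC.le hR h₁ h₂ hβ0.le t
      _ ≤ C * β ^ t * ∑ k ∈ range (t + 1), μ * δ⁻¹ ^ k := by gcongr with k; exact hdist k
      _ = _ := by rw [← mul_sum]; ring
  have hVdiff := (hasSum_discCost hp hC.le hR h₁ hβ0.le hβ1).sub
    (hasSum_discCost hp hC.le hR h₂ hβ0.le hβ1)
  have hbound := (hasSum_pow_mul_sum_range_inv_pow hβ0.le hβ1 hδ).mul_left (C * μ)
  have h1β : 1 - β ≠ 0 := (sub_pos.2 hβ1).ne'
  have hδβ : δ - β ≠ 0 := (sub_pos.2 hδ).ne'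
  rw [vecNorm_eq_norm]
  calc _ ≤ C * μ * (δ / ((1 - β) * (δ - β))) := hVdiff.norm_le_of_bounded hbound hterm
    _ = _ := by field_simp

/-- the map `π ↦ V(π,R)` is Lipschitz with constant `Kδ/(δ − β)` with respect
to the metric `μ`. -/
theorem stmt_6 (m n : ℕ) (hm : 1 ≤ m) (hn : 1 ≤ n)
    (p : Fin m → Fin n → Fin m → ℝ) (hp : IsTransKer m n p)
    (β : ℝ) (hβ0 : 0 < β) (hβ1 : β < 1)
    (C : ℝ) (hC : 0 < C)
    (δ : ℝ) (hδ : β < δ) (hδ1 : δ < 1)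
    (R : Matrix (Fin m) (Fin n) ℝ) (hR : ∀ s a, |R s a| ≤ C)
    (π₁ π₂ : ℕ → Matrix (Fin m) (Fin n) ℝ)
    (h₁ : ∀ t, IsStoch m n (π₁ t)) (h₂ : ∀ t, IsStoch m n (π₂ t)) :
    vecNorm (Vinf β p π₁ R - Vinf β p π₂ R) ≤
      C / (1 - β) * δ / (δ - β) * policyDist δ π₁ π₂ :=
  stmt_6_general m n p hp β hβ0 hβ1 C hC δ hδ hδ1 R hR π₁ π₂ h₁ h₂
end

section
/- Let R ∈ ℝ^{m×n} have every entry of absolute value at most C, and let K := C/(1−β). Let π₁ = (d_t) and π₂ = (f_t) be Markovian randomized policies, T ≥ 1 and 0 ≤ t ≤ T−1. Then ‖Q_t^{T,π₁,R}‖_max ≤ exp(|γ| K (β^t − β^T)), and moreover ‖Q_t^{T,π₁,R} − Q_t^{T,π₂,R}‖_max = 0 when t = T−1, while for 0 ≤ t ≤ T−2, ‖Q_t^{T,π₁,R} − Q_t^{T,π₂,R}‖_max ≤ exp(|γ| K (β^t − β^T)) Σ_{τ=t+1}^{T−1} ‖d_τ − f_τ‖_∞, where ‖B‖_max is the maximum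 absolute entry and ‖·‖_∞ the maximum absolute row-sum norm. -/
open Finset Filter Matrix

lemma maxNorm_le_of {m n : ℕ} (hm : 0 < m) (hn : 0 < n)
    {B : Matrix (Fin m) (Fin n) ℝ} {c : ℝ} (h : ∀ s a, |B s a| ≤ c) :
    maxNorm B ≤ c := by
  haveI : Nonempty (Fin m) := ⟨⟨0, hm⟩⟩
  haveI : Nonempty (Fin n) := ⟨⟨0, hn⟩⟩
  exact ciSup_le fun s => ciSup_le fun a => h s a

lemma sum_abs_le_rowSumNorm {m n : ℕ} (B : Matrix (Fin m) (Fin n) ℝ) (s : Fin m) :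
    ∑ a, |B s a| ≤ rowSumNorm B := by
  rw [rowSumNorm]
  exact le_ciSup (f := fun i => ∑ j, |B i j|)
    (Set.Finite.bddAbove (Set.finite_range _)) s

lemma rowSumNorm_nonneg {m n : ℕ} (hm : 0 < m) (B : Matrix (Fin m) (Fin n) ℝ) :
    0 ≤ rowSumNorm B :=
  le_trans (Finset.sum_nonneg fun a _ => abs_nonneg _)
    (sum_abs_le_rowSumNorm B ⟨0, hm⟩)

lemma Qrev_bound {m n : ℕ}
    (p : Fin m → Fin n → Fin m → ℝ) (hp : IsTransKer m n p)
    {β : ℝ} (hβ0 : 0 < β) (hβ1 : β < 1) (γ : ℝ)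
    {C : ℝ} (hC : 0 < C)
    (R : Matrix (Fin m) (Fin n) ℝ) (hR : ∀ s a, |R s a| ≤ C)
    (π : ℕ → Matrix (Fin m) (Fin n) ℝ) (hπ : ∀ t, IsStoch m n (π t))
    (T : ℕ) (hT : 1 ≤ T) :
    ∀ k, k ≤ T - 1 → ∀ s a, 0 ≤ Qrev β γ p π R T k s a ∧
      Qrev β γ p π R T k s a ≤
        Real.exp (|γ| * (C / (1 - β)) * (β ^ (T - 1 - k) - β ^ T)) := by
  have hβne : (1:ℝ) - β ≠ 0 := by linarith
  intro k
  induction k with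
  | zero =>
    intro _ s a
    refine ⟨(Real.exp_pos _).le, ?_⟩
    rw [show Qrev β γ p π R T 0 s a = Real.exp (γ * β ^ (T-1) * R s a) from rfl]
    apply Real.exp_le_exp.2
    have hTT : β ^ T = β ^ (T-1) * β := by
      rw [← pow_succ]; congr 1; omega
    have heq : |γ| * (C / (1 - β)) * (β ^ (T - 1 - 0) - β ^ T) = |γ| * C * β ^ (T-1) := by
      simp only [Nat.sub_zero]
      rw [hTT]; field_simp
    rw [heq]
    calc γ * β ^ (T-1) * R s a ≤ |γ * β ^ (T-1) * R s a| := le_abs_self _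
      _ = |γ| * β ^ (T-1) * |R s a| := by
          rw [abs_mul, abs_mul, abs_of_nonneg (pow_nonneg hβ0.le _)]
      _ ≤ |γ| * β ^ (T-1) * C :=
          mul_le_mul_of_nonneg_left (hR s a) (by positivity)
      _ = |γ| * C * β ^ (T-1) := by ring
  | succ k ih =>
    intro hk s a
    have hk' : k ≤ T - 1 := by omega
    set u := T - 1 - (k+1) with hu
    have huk : T - 1 - k = u + 1 := by omega
    set M := Real.exp (|γ| * (C / (1 - β)) * (β ^ (u+1) - β ^ T)) with hM
    have ihM : ∀ s' a', 0 ≤ Qrev β γ p π R T k s' a' ∧ Qrev β γ p π R T k s' a' ≤ M := by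
      intro s' a'; have := ih hk' s' a'; rwa [huk] at this
    have hinner : ∀ s', 0 ≤ ∑ a', π (T-1-k) s' a' * Qrev β γ p π R T k s' a' ∧
        ∑ a', π (T-1-k) s' a' * Qrev β γ p π R T k s' a' ≤ M := by
      intro s'
      constructor
      · exact Finset.sum_nonneg fun a' _ => mul_nonneg ((hπ _).1 s' a') (ihM s' a').1
      · calc ∑ a', π (T-1-k) s' a' * Qrev β γ p π R T k s' a'
            ≤ ∑ a', π (T-1-k) s' a' * M :=
              Finset.sum_le_sum fun a' _ =>
                mul_le_mul_of_nonneg_left (ihM s' a').2 ((hπ _).1 s' a')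
          _ = M := by rw [← Finset.sum_mul, (hπ _).2 s', one_mul]
    have houter : 0 ≤ (∑ s', p s a s' * ∑ a', π (T-1-k) s' a' * Qrev β γ p π R T k s' a') ∧
        (∑ s', p s a s' * ∑ a', π (T-1-k) s' a' * Qrev β γ p π R T k s' a') ≤ M := by
      constructor
      · exact Finset.sum_nonneg fun s' _ => mul_nonneg (hp.1 s a s') (hinner s').1
      · calc (∑ s', p s a s' * ∑ a', π (T-1-k) s' a' * Qrev β γ p π R T k s' a')
            ≤ ∑ s', p s a s' * M := Finset.sum_le_sum fun s' _ =>
              mul_le_mul_of_nonneg_left (hinner s').2 (hp.1 s a s')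
          _ = M := by rw [← Finset.sum_mul, hp.2 s a, one_mul]
    have hQ : Qrev β γ p π R T (k+1) s a =
        Real.exp (γ * β ^ u * R s a) *
          ∑ s', p s a s' * ∑ a', π (T-1-k) s' a' * Qrev β γ p π R T k s' a' := rfl
    constructor
    · rw [hQ]; exact mul_nonneg (Real.exp_pos _).le houter.1
    · rw [hQ]
      have h1 : Real.exp (γ * β ^ u * R s a) ≤ Real.exp (|γ| * C * β ^ u) := by
        apply Real.exp_le_exp.2
        calc γ * β ^ u * R s a ≤ |γ * β ^ u * R s a| := le_abs_self _
          _ = |γ| * β ^ u * |R s a| := by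
              rw [abs_mul, abs_mul, abs_of_nonneg (pow_nonneg hβ0.le _)]
          _ ≤ |γ| * β ^ u * C := mul_le_mul_of_nonneg_left (hR s a) (by positivity)
          _ = |γ| * C * β ^ u := by ring
      have hexp : |γ| * C * β ^ u + |γ| * (C / (1 - β)) * (β ^ (u+1) - β ^ T)
          = |γ| * (C / (1 - β)) * (β ^ u - β ^ T) := by
        rw [pow_succ]; field_simp; ring
      calc Real.exp (γ * β ^ u * R s a) *
            (∑ s', p s a s' * ∑ a', π (T-1-k) s' a' * Qrev β γ p π R T k s' a')
          ≤ Real.exp (|γ| * C * β ^ u) * M :=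
            mul_le_mul h1 houter.2 houter.1 (Real.exp_pos _).le
        _ = Real.exp (|γ| * (C / (1 - β)) * (β ^ u - β ^ T)) := by
            rw [hM, ← Real.exp_add, hexp]

lemma Qrev_diff_bound {m n : ℕ} (hm : 0 < m)
    (p : Fin m → Fin n → Fin m → ℝ) (hp : IsTransKer m n p)
    {β : ℝ} (hβ0 : 0 < β) (hβ1 : β < 1) (γ : ℝ)
    {C : ℝ} (hC : 0 < C)
    (R : Matrix (Fin m) (Fin n) ℝ) (hR : ∀ s a, |R s a| ≤ C)
    (π₁ π₂ : ℕ → Matrix (Fin m) (Fin n) ℝ)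
    (h₁ : ∀ t, IsStoch m n (π₁ t)) (h₂ : ∀ t, IsStoch m n (π₂ t))
    (T : ℕ) (hT : 1 ≤ T) :
    ∀ k, k ≤ T - 1 → ∀ s a,
      |Qrev β γ p π₁ R T k s a - Qrev β γ p π₂ R T k s a| ≤
        Real.exp (|γ| * (C / (1 - β)) * (β ^ (T - 1 - k) - β ^ T)) *
          ∑ τ ∈ Finset.Icc (T - k) (T - 1), rowSumNorm (π₁ τ - π₂ τ) := by
  have hβne : (1:ℝ) - β ≠ 0 := by linarith
  intro k
  induction k with
  | zero =>
    intro _ s a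
    have hz : Qrev β γ p π₁ R T 0 s a = Qrev β γ p π₂ R T 0 s a := rfl
    rw [hz, sub_self, abs_zero]
    exact mul_nonneg (Real.exp_pos _).le
      (Finset.sum_nonneg fun τ _ => rowSumNorm_nonneg hm _)
  | succ k ih =>
    intro hk s a
    have hk' : k ≤ T - 1 := by omega
    set u := T - 1 - (k+1) with hu
    have huk : T - 1 - k = u + 1 := by omega
    set M := Real.exp (|γ| * (C / (1 - β)) * (β ^ (u+1) - β ^ T)) with hM
    set S := ∑ τ ∈ Finset.Icc (T - k) (T - 1), rowSumNorm (π₁ τ - π₂ τ) with hS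
    have hS0 : 0 ≤ S :=
      Finset.sum_nonneg fun τ _ => rowSumNorm_nonneg hm _
    have hrsn0 : 0 ≤ rowSumNorm (π₁ (T-1-k) - π₂ (T-1-k)) := rowSumNorm_nonneg hm _
    have hQb := Qrev_bound p hp hβ0 hβ1 γ hC R hR π₁ h₁ T hT k hk'
    have hQb' : ∀ s' a', 0 ≤ Qrev β γ p π₁ R T k s' a' ∧
        Qrev β γ p π₁ R T k s' a' ≤ M := by
      intro s' a'; have := hQb s' a'; rwa [huk] at this
    have ih' : ∀ s' a', |Qrev β γ p π₁ R T k s' a' - Qrev β γ p π₂ R T k s' a'| ≤ M * S := by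
      intro s' a'; have := ih hk' s' a'; rwa [huk] at this
    have hM0 : (0:ℝ) ≤ M := (Real.exp_pos _).le
    -- bound on difference of inner sums
    have hinner : ∀ s',
        |(∑ a', π₁ (T-1-k) s' a' * Qrev β γ p π₁ R T k s' a') -
          ∑ a', π₂ (T-1-k) s' a' * Qrev β γ p π₂ R T k s' a'| ≤
          M * rowSumNorm (π₁ (T-1-k) - π₂ (T-1-k)) + M * S := by
      intro s'
      have hsplit : (∑ a', π₁ (T-1-k) s' a' * Qrev β γ p π₁ R T k s' a') -
          (∑ a', π₂ (T-1-k) s' a' * Qrev β γ p π₂ R T k s' a') =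
          (∑ a', (π₁ (T-1-k) s' a' - π₂ (T-1-k) s' a') * Qrev β γ p π₁ R T k s' a') +
          ∑ a', π₂ (T-1-k) s' a' *
            (Qrev β γ p π₁ R T k s' a' - Qrev β γ p π₂ R T k s' a') := by
        rw [← Finset.sum_add_distrib, ← Finset.sum_sub_distrib]
        congr 1; ext a'; ring
      rw [hsplit]
      have h1 : |∑ a', (π₁ (T-1-k) s' a' - π₂ (T-1-k) s' a') * Qrev β γ p π₁ R T k s' a'|
          ≤ M * rowSumNorm (π₁ (T-1-k) - π₂ (T-1-k)) := by
        calc |∑ a', (π₁ (T-1-k) s' a' - π₂ (T-1-k) s' a') * Qrev β γ p π₁ R T k s' a'|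
            ≤ ∑ a', |(π₁ (T-1-k) s' a' - π₂ (T-1-k) s' a') * Qrev β γ p π₁ R T k s' a'| :=
              Finset.abs_sum_le_sum_abs _ _
          _ ≤ ∑ a', |π₁ (T-1-k) s' a' - π₂ (T-1-k) s' a'| * M := by
              refine Finset.sum_le_sum fun a' _ => ?_
              rw [abs_mul, abs_of_nonneg (hQb' s' a').1]
              exact mul_le_mul_of_nonneg_left (hQb' s' a').2 (abs_nonneg _)
          _ = (∑ a', |(π₁ (T-1-k) - π₂ (T-1-k)) s' a'|) * M := by
              rw [Finset.sum_mul]; simp [Matrix.sub_apply]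
          _ ≤ rowSumNorm (π₁ (T-1-k) - π₂ (T-1-k)) * M :=
              mul_le_mul_of_nonneg_right (sum_abs_le_rowSumNorm _ _) hM0
          _ = M * rowSumNorm (π₁ (T-1-k) - π₂ (T-1-k)) := by ring
      have h2 : |∑ a', π₂ (T-1-k) s' a' *
          (Qrev β γ p π₁ R T k s' a' - Qrev β γ p π₂ R T k s' a')| ≤ M * S := by
        calc |∑ a', π₂ (T-1-k) s' a' *
              (Qrev β γ p π₁ R T k s' a' - Qrev β γ p π₂ R T k s' a')|
            ≤ ∑ a', |π₂ (T-1-k) s' a' *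
              (Qrev β γ p π₁ R T k s' a' - Qrev β γ p π₂ R T k s' a')| :=
              Finset.abs_sum_le_sum_abs _ _
          _ ≤ ∑ a', π₂ (T-1-k) s' a' * (M * S) := by
              refine Finset.sum_le_sum fun a' _ => ?_
              rw [abs_mul, abs_of_nonneg ((h₂ _).1 s' a')]
              exact mul_le_mul_of_nonneg_left (ih' s' a') ((h₂ _).1 s' a')
          _ = M * S := by rw [← Finset.sum_mul, (h₂ _).2 s', one_mul]
      exact le_trans (abs_add_le _ _) (add_le_add h1 h2)
    have houter :
        |(∑ s', p s a s' * ∑ a', π₁ (T-1-k) s' a' * Qrev β γ p π₁ R T k s' a') -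
          ∑ s', p s a s' * ∑ a', π₂ (T-1-k) s' a' * Qrev β γ p π₂ R T k s' a'| ≤
          M * rowSumNorm (π₁ (T-1-k) - π₂ (T-1-k)) + M * S := by
      rw [← Finset.sum_sub_distrib]
      calc |∑ s', (p s a s' * (∑ a', π₁ (T-1-k) s' a' * Qrev β γ p π₁ R T k s' a') -
              p s a s' * ∑ a', π₂ (T-1-k) s' a' * Qrev β γ p π₂ R T k s' a')|
          ≤ ∑ s', |p s a s' * (∑ a', π₁ (T-1-k) s' a' * Qrev β γ p π₁ R T k s' a') -
              p s a s' * ∑ a', π₂ (T-1-k) s' a' * Qrev β γ p π₂ R T k s' a'| :=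
            Finset.abs_sum_le_sum_abs _ _
        _ ≤ ∑ s', p s a s' * (M * rowSumNorm (π₁ (T-1-k) - π₂ (T-1-k)) + M * S) := by
            refine Finset.sum_le_sum fun s' _ => ?_
            rw [← mul_sub, abs_mul, abs_of_nonneg (hp.1 s a s')]
            exact mul_le_mul_of_nonneg_left (hinner s') (hp.1 s a s')
        _ = M * rowSumNorm (π₁ (T-1-k) - π₂ (T-1-k)) + M * S := by
            rw [← Finset.sum_mul, hp.2 s a, one_mul]
    have hQ1 : Qrev β γ p π₁ R T (k+1) s a =
        Real.exp (γ * β ^ u * R s a) *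
          ∑ s', p s a s' * ∑ a', π₁ (T-1-k) s' a' * Qrev β γ p π₁ R T k s' a' := rfl
    have hQ2 : Qrev β γ p π₂ R T (k+1) s a =
        Real.exp (γ * β ^ u * R s a) *
          ∑ s', p s a s' * ∑ a', π₂ (T-1-k) s' a' * Qrev β γ p π₂ R T k s' a' := rfl
    rw [hQ1, hQ2, ← mul_sub, abs_mul, Real.abs_exp]
    have h1 : Real.exp (γ * β ^ u * R s a) ≤ Real.exp (|γ| * C * β ^ u) := by
      apply Real.exp_le_exp.2
      calc γ * β ^ u * R s a ≤ |γ * β ^ u * R s a| := le_abs_self _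
        _ = |γ| * β ^ u * |R s a| := by
            rw [abs_mul, abs_mul, abs_of_nonneg (pow_nonneg hβ0.le _)]
        _ ≤ |γ| * β ^ u * C := mul_le_mul_of_nonneg_left (hR s a) (by positivity)
        _ = |γ| * C * β ^ u := by ring
    have hexp : |γ| * C * β ^ u + |γ| * (C / (1 - β)) * (β ^ (u+1) - β ^ T)
        = |γ| * (C / (1 - β)) * (β ^ u - β ^ T) := by
      rw [pow_succ]; field_simp; ring
    have hIcc : ∑ τ ∈ Finset.Icc (T - (k+1)) (T - 1), rowSumNorm (π₁ τ - π₂ τ)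
        = rowSumNorm (π₁ (T-1-k) - π₂ (T-1-k)) + S := by
      have e1 : T - (k+1) = T - 1 - k := by omega
      have e2 : T - k = (T - 1 - k) + 1 := by omega
      rw [hS, e1, e2, Finset.Icc_add_one_left_eq_Ioc,
        ← Finset.Ioc_insert_left (by omega : T - 1 - k ≤ T - 1),
        Finset.sum_insert (by simp)]
    rw [hIcc]
    calc Real.exp (γ * β ^ u * R s a) *
          |(∑ s', p s a s' * ∑ a', π₁ (T-1-k) s' a' * Qrev β γ p π₁ R T k s' a') -
            ∑ s', p s a s' * ∑ a', π₂ (T-1-k) s' a' * Qrev β γ p π₂ R T k s' a'|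
        ≤ Real.exp (|γ| * C * β ^ u) *
            (M * rowSumNorm (π₁ (T-1-k) - π₂ (T-1-k)) + M * S) :=
          mul_le_mul h1 (houter) (abs_nonneg _) (Real.exp_pos _).le
      _ = (Real.exp (|γ| * C * β ^ u) * M) *
            (rowSumNorm (π₁ (T-1-k) - π₂ (T-1-k)) + S) := by ring
      _ = Real.exp (|γ| * (C / (1 - β)) * (β ^ u - β ^ T)) *
            (rowSumNorm (π₁ (T-1-k) - π₂ (T-1-k)) + S) := by
          rw [hM, ← Real.exp_add, hexp]

/-- bounds on the risk-sensitive Q-matrices and their differences. -/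
theorem stmt_8 (m n : ℕ) (hm : 1 ≤ m) (hn : 1 ≤ n)
    (p : Fin m → Fin n → Fin m → ℝ) (hp : IsTransKer m n p)
    (β : ℝ) (hβ0 : 0 < β) (hβ1 : β < 1)
    (γ : ℝ) (hγ : γ ≠ 0)
    (C : ℝ) (hC : 0 < C)
    (R : Matrix (Fin m) (Fin n) ℝ) (hR : ∀ s a, |R s a| ≤ C)
    (π₁ π₂ : ℕ → Matrix (Fin m) (Fin n) ℝ)
    (h₁ : ∀ t, IsStoch m n (π₁ t)) (h₂ : ∀ t, IsStoch m n (π₂ t))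
    (T t : ℕ) (hT : 1 ≤ T) (ht : t ≤ T - 1) :
    maxNorm (Qmat β γ p π₁ R T t) ≤ Real.exp (|γ| * (C / (1 - β)) * (β ^ t - β ^ T)) ∧
    (t + 1 = T → maxNorm (Qmat β γ p π₁ R T t - Qmat β γ p π₂ R T t) = 0) ∧
    (t + 2 ≤ T →
      maxNorm (Qmat β γ p π₁ R T t - Qmat β γ p π₂ R T t) ≤
        Real.exp (|γ| * (C / (1 - β)) * (β ^ t - β ^ T)) *
          ∑ τ ∈ Finset.Icc (t + 1) (T - 1), rowSumNorm (π₁ τ - π₂ τ)) := by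
  have hk : T - 1 - (T - 1 - t) = t := by omega
  have hkle : T - 1 - t ≤ T - 1 := by omega
  refine ⟨?_, ?_, ?_⟩
  · -- bound on maxNorm Qmat
    apply maxNorm_le_of hm hn
    intro s a
    have h := Qrev_bound p hp hβ0 hβ1 γ hC R hR π₁ h₁ T hT (T - 1 - t) hkle s a
    rw [hk] at h
    rw [Qmat, abs_of_nonneg h.1]
    exact h.2
  · intro hteq
    have hk0 : T - 1 - t = 0 := by omega
    have : Qmat β γ p π₁ R T t = Qmat β γ p π₂ R T t := by
      rw [Qmat, Qmat, hk0]
      rfl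
    rw [this, sub_self]
    haveI : Nonempty (Fin m) := ⟨⟨0, hm⟩⟩
    haveI : Nonempty (Fin n) := ⟨⟨0, hn⟩⟩
    simp [maxNorm]
  · intro htlt
    apply maxNorm_le_of hm hn
    intro s a
    have h := Qrev_diff_bound hm p hp hβ0 hβ1 γ hC R hR π₁ π₂ h₁ h₂ T hT
      (T - 1 - t) hkle s a
    rw [hk, show T - (T - 1 - t) = t + 1 from by omega] at h
    simpa [Qmat, Matrix.sub_apply] using h
end

section
/- Let R ∈ ℝ^{m×n} have every entry of absolute value at most C, and let K := C/(1−β). Then for every Markovian randomized policy π and every state x, the limit J(π,γ,R)(x) := lim_{T→∞} J_T(π,γ,R)(x) exists, and the convergence is uniform in the policy: for every ε > 0 there exists T* ≥ 1 such that |J_T(π,γ,R)(x) − J(π,γ,R)(x)| < ε for all T ≥ T*, all policies π ∈ Π_MR and all states x. -/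
open Finset Filter Matrix

lemma avg_abs_le {n : ℕ} (w f : Fin n → ℝ) (hw : ∀ a, 0 ≤ w a) (hw1 : ∑ a, w a = 1)
    {B : ℝ} (hf : ∀ a, |f a| ≤ B) : |∑ a, w a * f a| ≤ B := by
  calc |∑ a, w a * f a| ≤ ∑ a, |w a * f a| := Finset.abs_sum_le_sum_abs _ _
    _ = ∑ a, w a * |f a| := by
        refine Finset.sum_congr rfl fun a _ => ?_
        rw [abs_mul, abs_of_nonneg (hw a)]
    _ ≤ ∑ a, w a * B := Finset.sum_le_sum fun a _ => mul_le_mul_of_nonneg_left (hf a) (hw a)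
    _ = B := by rw [← Finset.sum_mul, hw1, one_mul]

lemma avg_mem {n : ℕ} (w f : Fin n → ℝ) (hw : ∀ a, 0 ≤ w a) (hw1 : ∑ a, w a = 1)
    {lo hi : ℝ} (h1 : ∀ a, lo ≤ f a) (h2 : ∀ a, f a ≤ hi) :
    lo ≤ ∑ a, w a * f a ∧ (∑ a, w a * f a) ≤ hi := by
  constructor
  · calc lo = ∑ a, w a * lo := by rw [← Finset.sum_mul, hw1, one_mul]
      _ ≤ ∑ a, w a * f a := Finset.sum_le_sum fun a _ => mul_le_mul_of_nonneg_left (h1 a) (hw a)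
  · calc ∑ a, w a * f a ≤ ∑ a, w a * hi :=
        Finset.sum_le_sum fun a _ => mul_le_mul_of_nonneg_left (h2 a) (hw a)
      _ = hi := by rw [← Finset.sum_mul, hw1, one_mul]

lemma abs_sub_one_le_of_mem {c y : ℝ} (hc : 0 ≤ c) (h1 : Real.exp (-c) ≤ y)
    (h2 : y ≤ Real.exp c) : |y - 1| ≤ Real.exp c - 1 := by
  have hmul : Real.exp c * Real.exp (-c) = 1 := by rw [← Real.exp_add]; simp
  have hpos := Real.exp_pos c
  rw [abs_le]
  constructor <;> nlinarith [sq_nonneg (Real.exp c - 1), Real.exp_pos (-c)]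

lemma exp_term_le {β γ C r : ℝ} (hβ : 0 ≤ β) (hr : |r| ≤ C) (e : ℕ) :
    Real.exp (γ * β ^ e * r) ≤ Real.exp (|γ| * C * β ^ e) := by
  have hb : (0:ℝ) ≤ β ^ e := pow_nonneg hβ e
  apply Real.exp_le_exp.2
  calc γ * β ^ e * r ≤ |γ * β ^ e * r| := le_abs_self _
    _ = |γ| * β ^ e * |r| := by rw [abs_mul, abs_mul, abs_of_nonneg hb]
    _ ≤ |γ| * β ^ e * C := mul_le_mul_of_nonneg_left hr (by positivity)
    _ = |γ| * C * β ^ e := by ring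

lemma exp_term_ge {β γ C r : ℝ} (hβ : 0 ≤ β) (hr : |r| ≤ C) (e : ℕ) :
    Real.exp (-(|γ| * C * β ^ e)) ≤ Real.exp (γ * β ^ e * r) := by
  have hb : (0:ℝ) ≤ β ^ e := pow_nonneg hβ e
  apply Real.exp_le_exp.2
  have : -(γ * β ^ e * r) ≤ |γ| * C * β ^ e := by
    calc -(γ * β ^ e * r) ≤ |γ * β ^ e * r| := neg_le_abs _
      _ = |γ| * β ^ e * |r| := by rw [abs_mul, abs_mul, abs_of_nonneg hb]
      _ ≤ |γ| * β ^ e * C := mul_le_mul_of_nonneg_left hr (by positivity)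
      _ = |γ| * C * β ^ e := by ring
  linarith

lemma Qrev_succ {m n : ℕ} (β γ : ℝ) (p : Fin m → Fin n → Fin m → ℝ)
    (π : ℕ → Matrix (Fin m) (Fin n) ℝ) (R : Matrix (Fin m) (Fin n) ℝ)
    (T k : ℕ) (s : Fin m) (a : Fin n) :
    Qrev β γ p π R T (k+1) s a = Real.exp (γ * β ^ (T - 1 - (k + 1)) * R s a) *
      ∑ s', p s a s' * ∑ a', π (T - 1 - k) s' a' * Qrev β γ p π R T k s' a' := rfl

lemma qrev_diff {m n : ℕ} (p : Fin m → Fin n → Fin m → ℝ) (hp : IsTransKer m n p)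
    (β γ C : ℝ) (hβ0 : 0 < β) (hC : 0 ≤ C)
    (R : Matrix (Fin m) (Fin n) ℝ) (hR : ∀ s a, |R s a| ≤ C)
    (π : ℕ → Matrix (Fin m) (Fin n) ℝ) (hπ : ∀ t, IsStoch m n (π t))
    (T : ℕ) (hT : 1 ≤ T) :
    ∀ k, k ≤ T - 1 → ∀ s a,
      |Qrev β γ p π R (T+1) (k+1) s a - Qrev β γ p π R T k s a| ≤
        Real.exp (|γ| * C * ∑ j ∈ Finset.Ico (T-1-k) T, β ^ j) *
          (Real.exp (|γ| * C * β ^ T) - 1) := by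
  have hcT : (0:ℝ) ≤ |γ| * C * β ^ T := by positivity
  intro k
  induction k with
  | zero =>
    intro _ s a
    simp only [Qrev, Nat.add_sub_cancel, Nat.sub_zero, Nat.zero_add]
    have hA : |(∑ s', p s a s' * ∑ a', π T s' a' * Real.exp (γ * β ^ T * R s' a')) - 1|
        ≤ Real.exp (|γ| * C * β ^ T) - 1 := by
      have inner : ∀ s', Real.exp (-(|γ| * C * β ^ T)) ≤
          (∑ a', π T s' a' * Real.exp (γ * β ^ T * R s' a')) ∧
          (∑ a', π T s' a' * Real.exp (γ * β ^ T * R s' a')) ≤ Real.exp (|γ| * C * β ^ T) :=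
        fun s' => avg_mem _ _ ((hπ T).1 s') ((hπ T).2 s')
          (fun a' => exp_term_ge hβ0.le (hR s' a') T)
          (fun a' => exp_term_le hβ0.le (hR s' a') T)
      have outer := avg_mem (p s a) _ (hp.1 s a) (hp.2 s a)
          (fun s' => (inner s').1) (fun s' => (inner s').2)
      exact abs_sub_one_le_of_mem hcT outer.1 outer.2
    have hIco : Finset.Ico (T-1) T = {T-1} := by
      rw [show T = (T-1)+1 by omega]; simp
    rw [hIco, Finset.sum_singleton]
    calc |Real.exp (γ * β ^ (T-1) * R s a) *
            (∑ s', p s a s' * ∑ a', π T s' a' * Real.exp (γ * β ^ T * R s' a')) -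
          Real.exp (γ * β ^ (T-1) * R s a)|
        = Real.exp (γ * β ^ (T-1) * R s a) *
            |(∑ s', p s a s' * ∑ a', π T s' a' * Real.exp (γ * β ^ T * R s' a')) - 1| := by
          rw [show Real.exp (γ * β ^ (T-1) * R s a) *
                (∑ s', p s a s' * ∑ a', π T s' a' * Real.exp (γ * β ^ T * R s' a')) -
              Real.exp (γ * β ^ (T-1) * R s a) = Real.exp (γ * β ^ (T-1) * R s a) *
                ((∑ s', p s a s' * ∑ a', π T s' a' * Real.exp (γ * β ^ T * R s' a')) - 1) by ring,
            abs_mul, abs_of_pos (Real.exp_pos _)]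
      _ ≤ Real.exp (|γ| * C * β ^ (T-1)) * (Real.exp (|γ| * C * β ^ T) - 1) := by
          apply mul_le_mul (exp_term_le hβ0.le (hR s a) _) hA (abs_nonneg _) (Real.exp_pos _).le
  | succ k ih =>
    intro hk1 s a
    have hk : k ≤ T - 1 := by omega
    have hk2 : k + 2 ≤ T := by omega
    rw [Qrev_succ β γ p π R (T+1) (k+1) s a, Qrev_succ β γ p π R T k s a]
    rw [show T + 1 - 1 - (k + 1 + 1) = T - 1 - (k+1) by omega,
        show T + 1 - 1 - (k + 1) = T - 1 - k by omega]
    set E := T - 1 - (k+1) with hE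
    set u := T - 1 - k with hu
    set Q' := Qrev β γ p π R (T+1) (k+1) with hQ'
    set Q := Qrev β γ p π R T k with hQ
    have hdiff : (∑ s', p s a s' * ∑ a', π u s' a' * Q' s' a') -
        (∑ s', p s a s' * ∑ a', π u s' a' * Q s' a') =
        ∑ s', p s a s' * ∑ a', π u s' a' * (Q' s' a' - Q s' a') := by
      rw [← Finset.sum_sub_distrib]
      refine Finset.sum_congr rfl fun s' _ => ?_
      rw [← mul_sub, ← Finset.sum_sub_distrib]
      congr 1; refine Finset.sum_congr rfl fun a' _ => ?_; ring
    have hAbnd : |(∑ s', p s a s' * ∑ a', π u s' a' * Q' s' a') -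
        (∑ s', p s a s' * ∑ a', π u s' a' * Q s' a')| ≤
        Real.exp (|γ| * C * ∑ j ∈ Finset.Ico u T, β ^ j) *
          (Real.exp (|γ| * C * β ^ T) - 1) := by
      rw [hdiff]
      refine avg_abs_le (p s a) _ (hp.1 s a) (hp.2 s a) fun s' => ?_
      refine avg_abs_le (π u s') _ ((hπ u).1 s') ((hπ u).2 s') fun a' => ?_
      exact ih hk s' a'
    have hsum : β ^ E + ∑ j ∈ Finset.Ico u T, β ^ j = ∑ j ∈ Finset.Ico E T, β ^ j := by
      rw [Finset.sum_eq_sum_Ico_succ_bot (show E < T by omega)]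
      rw [show E + 1 = u by omega]
    calc |Real.exp (γ * β ^ E * R s a) * (∑ s', p s a s' * ∑ a', π u s' a' * Q' s' a') -
          Real.exp (γ * β ^ E * R s a) * (∑ s', p s a s' * ∑ a', π u s' a' * Q s' a')|
        = Real.exp (γ * β ^ E * R s a) *
          |(∑ s', p s a s' * ∑ a', π u s' a' * Q' s' a') -
            (∑ s', p s a s' * ∑ a', π u s' a' * Q s' a')| := by
          rw [← mul_sub, abs_mul, abs_of_pos (Real.exp_pos _)]
      _ ≤ Real.exp (|γ| * C * β ^ E) *
            (Real.exp (|γ| * C * ∑ j ∈ Finset.Ico u T, β ^ j) *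
              (Real.exp (|γ| * C * β ^ T) - 1)) := by
          apply mul_le_mul (exp_term_le hβ0.le (hR s a) _) hAbnd (abs_nonneg _) (Real.exp_pos _).le
      _ = Real.exp (|γ| * C * ∑ j ∈ Finset.Ico E T, β ^ j) *
            (Real.exp (|γ| * C * β ^ T) - 1) := by
          rw [← mul_assoc, ← Real.exp_add, ← mul_add, hsum]

lemma jt_diff {m n : ℕ} (p : Fin m → Fin n → Fin m → ℝ) (hp : IsTransKer m n p)
    (β γ C : ℝ) (hβ0 : 0 < β) (hβ1 : β < 1) (hC : 0 ≤ C)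
    (R : Matrix (Fin m) (Fin n) ℝ) (hR : ∀ s a, |R s a| ≤ C)
    (π : ℕ → Matrix (Fin m) (Fin n) ℝ) (hπ : ∀ t, IsStoch m n (π t))
    (T : ℕ) (x : Fin m) :
    |JT β γ p π R (T+1) x - JT β γ p π R T x| ≤
      Real.exp (|γ| * C / (1-β)) * (Real.exp (|γ| * C) - 1) * β ^ T := by
  have hexp1 : (1:ℝ) ≤ Real.exp (|γ| * C) := Real.one_le_exp (by positivity)
  rcases Nat.eq_zero_or_pos T with hT0 | hT
  · subst hT0
    have : JT β γ p π R 1 x = JT β γ p π R 0 x := by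
      simp [JT, Qmat, Qrev]
    rw [this, sub_self, abs_zero]
    exact mul_nonneg (mul_nonneg (Real.exp_pos _).le (by linarith)) (pow_nonneg hβ0.le _)
  · -- T ≥ 1
    have hQ1 : Qmat β γ p π R (T+1) 0 = Qrev β γ p π R (T+1) ((T-1)+1) := by
      unfold Qmat; rw [show T + 1 - 1 - 0 = (T-1)+1 by omega]
    have hQ2 : Qmat β γ p π R T 0 = Qrev β γ p π R T (T-1) := by
      unfold Qmat; rw [Nat.sub_zero]
    have hdiff : JT β γ p π R (T+1) x - JT β γ p π R T x =
        ∑ a, π 0 x a * (Qrev β γ p π R (T+1) ((T-1)+1) x a - Qrev β γ p π R T (T-1) x a) := by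
      unfold JT
      rw [hQ1, hQ2, ← Finset.sum_sub_distrib]
      refine Finset.sum_congr rfl fun a _ => by ring
    -- entrywise bound
    have hb := qrev_diff p hp β γ C hβ0 hC R hR π hπ T hT (T-1) le_rfl
    have hIco : Finset.Ico (T-1-(T-1)) T = Finset.range T := by
      rw [Nat.sub_self, ← Finset.range_eq_Ico]
    have hgeo : ∑ j ∈ Finset.range T, β ^ j ≤ 1 / (1-β) := by
      have hml := geom_sum_mul β T
      rw [le_div_iff₀ (by linarith : (0:ℝ) < 1 - β)]
      nlinarith [pow_nonneg hβ0.le T]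
    have hconv : Real.exp (|γ| * C * β ^ T) - 1 ≤ β ^ T * (Real.exp (|γ| * C) - 1) := by
      have hb0 : (0:ℝ) ≤ β ^ T := pow_nonneg hβ0.le T
      have hb1 : β ^ T ≤ 1 := pow_le_one₀ hβ0.le hβ1.le
      have hcv := convexOn_exp.2 (Set.mem_univ (0:ℝ)) (Set.mem_univ (|γ| * C))
        (by linarith : (0:ℝ) ≤ 1 - β ^ T) hb0 (by ring)
      simp only [smul_eq_mul, mul_zero, zero_add, Real.exp_zero, mul_one] at hcv
      calc Real.exp (|γ| * C * β ^ T) - 1 = Real.exp (β ^ T * (|γ| * C)) - 1 := by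
            rw [mul_comm]
        _ ≤ β ^ T * (Real.exp (|γ| * C) - 1) := by nlinarith
    have hE : ∀ a, |Qrev β γ p π R (T+1) ((T-1)+1) x a - Qrev β γ p π R T (T-1) x a| ≤
        Real.exp (|γ| * C / (1-β)) * (Real.exp (|γ| * C) - 1) * β ^ T := by
      intro a
      refine (hb x a).trans ?_
      rw [hIco]
      calc Real.exp (|γ| * C * ∑ j ∈ Finset.range T, β ^ j) *
              (Real.exp (|γ| * C * β ^ T) - 1)
          ≤ Real.exp (|γ| * C / (1-β)) * (β ^ T * (Real.exp (|γ| * C) - 1)) := by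
            apply mul_le_mul _ hconv _ (Real.exp_pos _).le
            · apply Real.exp_le_exp.2
              calc |γ| * C * ∑ j ∈ Finset.range T, β ^ j ≤ |γ| * C * (1/(1-β)) :=
                    mul_le_mul_of_nonneg_left hgeo (by positivity)
                _ = |γ| * C / (1-β) := by ring
            · have : (1:ℝ) ≤ Real.exp (|γ| * C * β ^ T) :=
                Real.one_le_exp (by positivity)
              linarith
        _ = Real.exp (|γ| * C / (1-β)) * (Real.exp (|γ| * C) - 1) * β ^ T := by ring
    rw [hdiff]
    exact avg_abs_le (π 0 x) _ ((hπ 0).1 x) ((hπ 0).2 x) hE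

/-- for every policy and state the limit `J(π,γ,R)(x) = lim_T J_T(π,γ,R)(x)`
exists, and the convergence is uniform in the policy and the state. -/
theorem stmt_11 (m n : ℕ) (hm : 1 ≤ m) (hn : 1 ≤ n)
    (p : Fin m → Fin n → Fin m → ℝ) (hp : IsTransKer m n p)
    (β : ℝ) (hβ0 : 0 < β) (hβ1 : β < 1)
    (γ : ℝ) (hγ : γ ≠ 0)
    (C : ℝ) (hC : 0 < C)
    (R : Matrix (Fin m) (Fin n) ℝ) (hR : ∀ s a, |R s a| ≤ C) :
    (∀ π : ℕ → Matrix (Fin m) (Fin n) ℝ, (∀ t, IsStoch m n (π t)) → ∀ x,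
      Filter.Tendsto (fun T => JT β γ p π R T x) Filter.atTop (nhds (Jinf β γ p π R x))) ∧
    ∀ ε > (0 : ℝ), ∃ T₀ : ℕ, 1 ≤ T₀ ∧ ∀ T ≥ T₀, ∀ π : ℕ → Matrix (Fin m) (Fin n) ℝ,
      (∀ t, IsStoch m n (π t)) → ∀ x, |JT β γ p π R T x - Jinf β γ p π R x| < ε := by
  set M := Real.exp (|γ| * C / (1-β)) * (Real.exp (|γ| * C) - 1) with hM
  have key : ∀ (π : ℕ → Matrix (Fin m) (Fin n) ℝ), (∀ t, IsStoch m n (π t)) → ∀ x T,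
      dist (JT β γ p π R T x) (JT β γ p π R (T+1) x) ≤ M * β ^ T := by
    intro π hπ x T
    rw [Real.dist_eq, abs_sub_comm]
    exact jt_diff p hp β γ C hβ0 hβ1 hC.le R hR π hπ T x
  have h1 : ∀ π : ℕ → Matrix (Fin m) (Fin n) ℝ, (∀ t, IsStoch m n (π t)) → ∀ x,
      Filter.Tendsto (fun T => JT β γ p π R T x) Filter.atTop (nhds (Jinf β γ p π R x)) := by
    intro π hπ x
    have hc : CauchySeq (fun T => JT β γ p π R T x) :=
      cauchySeq_of_le_geometric β M hβ1 (key π hπ x)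
    obtain ⟨l, hl⟩ := cauchySeq_tendsto_of_complete hc
    exact tendsto_nhds_limUnder ⟨l, hl⟩
  refine ⟨h1, ?_⟩
  intro ε hε
  have htends : Filter.Tendsto (fun T : ℕ => M * β ^ T / (1-β)) Filter.atTop (nhds 0) := by
    have hp0 := tendsto_pow_atTop_nhds_zero_of_lt_one hβ0.le hβ1
    have := (hp0.const_mul M).div_const (1-β)
    simpa using this
  obtain ⟨T₁, hT₁⟩ := Filter.eventually_atTop.1 (htends.eventually_lt_const hε)
  refine ⟨max T₁ 1, le_max_right _ _, ?_⟩
  intro T hT π hπ x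
  have hd := dist_le_of_le_geometric_of_tendsto β M hβ1 (key π hπ x) (h1 π hπ x) T
  rw [← Real.dist_eq]
  exact lt_of_le_of_lt hd (hT₁ T (le_trans (le_max_left _ _) hT))
end
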